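/- For every internal inductive game tree T, every action a ∈ A(T), and any baseline assignment b, the variance of the baseline-corrected action value satisfies the exact one-step recursion Var_z[v̂(T, a; z)] = (1/q_T(a))·Var_{z'}[v̂(T_a; z')] + ((1 − q_T(a))/q_T(a))·(û(T_a) − b_T(a))², where z' is a trajectory of T_a; consequently Var_z[v̂(T, a; z)] ≤ (1/q_T(a))·( Var_{z'}[v̂(T_a; z')] + (û(T_a) − b_T(a))² ). -/

import Mathlib

/-- An inductive game tree: either a leaf carrying a utility `u`, or an internal node
carrying a nonempty finite action set `Fin (n+1)`, a subtree `child a` for each action,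
a strategy distribution `σ`, a sampling distribution `q`, and baseline values `b`. -/
inductive GameTree : Type
  | leaf (u : ℝ) : GameTree
  | node (n : ℕ) (child : Fin (n + 1) → GameTree)
      (σ : Fin (n + 1) → ℝ) (q : Fin (n + 1) → ℝ) (b : Fin (n + 1) → ℝ) : GameTree

namespace GameTree

/-- Expected utility `û`: `û(leaf u) = u` and `û(T) = Σ_a σ_T(a)·û(T_a)` at internal nodes. -/
noncomputable def eu : GameTree → ℝ
  | leaf u => u
  | node n child σ _ _ => ∑ a : Fin (n + 1), σ a * eu (child a)

/-- Validity: at every internal node, `σ` is a probability distribution and `q` is a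
probability distribution with `q a > 0` for every action `a`. -/
def Valid : GameTree → Prop
  | leaf _ => True
  | node n child σ q _ =>
      (∀ a, 0 ≤ σ a) ∧ (∑ a : Fin (n + 1), σ a = 1) ∧
      (∀ a, 0 < q a) ∧ (∑ a : Fin (n + 1), q a = 1) ∧
      (∀ a, Valid (child a))

/-- A sampled trajectory of `T`: a root-to-leaf path in the tree. -/
inductive Traj : GameTree → Type
  | leaf (u : ℝ) : Traj (.leaf u)
  | step {n : ℕ} {child : Fin (n + 1) → GameTree} {σ q b : Fin (n + 1) → ℝ}
      (astar : Fin (n + 1)) (t : Traj (child astar)) : Traj (.node n child σ q b)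

/-- Expectation `E_z[f(z)]` over the trajectory distribution (each trajectory has the
product of the `q`-probabilities of its edges as probability). -/
noncomputable def expT : (T : GameTree) → (Traj T → ℝ) → ℝ
  | leaf u, f => f (.leaf u)
  | node n child _ q _, f =>
      ∑ a : Fin (n + 1), q a * expT (child a) (fun t => f (.step a t))

/-- Variance `Var_z[f(z)]` over the trajectory distribution. -/
noncomputable def varT (T : GameTree) (f : Traj T → ℝ) : ℝ :=
  expT T (fun z => (f z - expT T f) ^ 2)

/-- Baseline-corrected sampled value `v̂(T; z) = Σ_a σ_T(a)·v̂(T, a; z)`, with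
`v̂(T, a; z) = (𝟙[a = a*]/q_T(a))·(v̂(T_a; z') − b_T(a)) + b_T(a)`. -/
noncomputable def bval : {T : GameTree} → Traj T → ℝ
  | _, .leaf u => u
  | _, @Traj.step n child σ q b astar t =>
      ∑ a : Fin (n + 1), σ a *
        ((if a = astar then (1 : ℝ) else 0) / q a * (bval t - b a) + b a)

/-- Baseline-corrected sampled action value `v̂(T, a; z)` at an internal root:
`(𝟙[a = a*]/q_T(a))·(v̂(T_a; z') − b_T(a)) + b_T(a)` where `z = a*·z'`. -/
noncomputable def bvalAct {n : ℕ} {child : Fin (n + 1) → GameTree}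
    {σ q b : Fin (n + 1) → ℝ}
    (a : Fin (n + 1)) : Traj (.node n child σ q b) → ℝ
  | .step astar t => (if a = astar then (1 : ℝ) else 0) / q a * (bval t - b a) + b a

end GameTree

namespace GameTree

theorem expT_add : ∀ (T : GameTree) (f g : Traj T → ℝ),
    expT T (fun z => f z + g z) = expT T f + expT T g := by
  intro T
  induction T with
  | leaf u => intro f g; simp [expT]
  | node n child σ q b ih =>
    intro f g
    simp only [expT, ih, mul_add, Finset.sum_add_distrib]

theorem expT_smul : ∀ (T : GameTree) (c : ℝ) (f : Traj T → ℝ),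
    expT T (fun z => c * f z) = c * expT T f := by
  intro T
  induction T with
  | leaf u => intro c f; simp [expT]
  | node n child σ q b ih =>
    intro c f
    simp only [expT, ih, Finset.mul_sum]
    congr 1; funext a; ring

theorem expT_const : ∀ (T : GameTree), Valid T → ∀ (c : ℝ),
    expT T (fun _ => c) = c := by
  intro T
  induction T with
  | leaf u => intro _ c; simp [expT]
  | node n child σ q b ih =>
    rintro ⟨_, _, _, hq1, hVc⟩ c
    simp only [expT, ih _ (hVc _)]
    rw [← Finset.sum_mul, hq1, one_mul]

theorem expT_affine (T : GameTree) (hT : Valid T) (α β : ℝ) (f : Traj T → ℝ) :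
    expT T (fun z => α * f z + β) = α * expT T f + β := by
  rw [expT_add T (fun z => α * f z) (fun _ => β), expT_smul, expT_const T hT]

theorem expT_affine_sq (T : GameTree) (hT : Valid T) (α β : ℝ) (f : Traj T → ℝ) :
    expT T (fun z => (α * f z + β) ^ 2)
      = α ^ 2 * expT T (fun z => f z ^ 2) + 2 * α * β * expT T f + β ^ 2 := by
  have h : (fun z => (α * f z + β) ^ 2)
      = fun z => α ^ 2 * (f z ^ 2) + ((2 * α * β) * f z + β ^ 2) := by
    funext z; ring
  rw [h, expT_add T (fun z => α ^ 2 * f z ^ 2) (fun z => (2 * α * β) * f z + β ^ 2),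
    expT_smul, expT_affine T hT]
  ring

theorem expT_sum : ∀ (T : GameTree) (m : ℕ) (f : Fin m → Traj T → ℝ),
    expT T (fun z => ∑ i, f i z) = ∑ i, expT T (f i) := by
  intro T m
  induction m with
  | zero =>
    intro f
    simp only [Finset.univ_eq_empty, Finset.sum_empty]
    have := expT_smul T 0 (fun _ => 0)
    simpa using this
  | succ m ih =>
    intro f
    simp only [Fin.sum_univ_succ]
    rw [expT_add T (fun z => f 0 z) (fun z => ∑ i : Fin m, f i.succ z), ih]

theorem sum_q_ite {n : ℕ} (q : Fin (n + 1) → ℝ) (hq1 : ∑ a, q a = 1)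
    (a : Fin (n + 1)) (S D : ℝ) :
    ∑ a', q a' * (if a = a' then S else D) = q a * S + (1 - q a) * D := by
  have h : ∀ a', q a' * (if a = a' then S else D)
      = (if a = a' then q a' * (S - D) else 0) + q a' * D := by
    intro a'; by_cases h : a = a' <;> simp [h] <;> ring
  simp only [h, Finset.sum_add_distrib, Finset.sum_ite_eq, Finset.mem_univ, if_true,
    ← Finset.sum_mul, hq1]
  ring

theorem expT_bval : ∀ (T : GameTree), Valid T → expT T (fun z => bval z) = eu T := by
  intro T
  induction T with
  | leaf u => intro _; simp [expT, bval, eu]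
  | node n child σ q b ih =>
    rintro ⟨hσ0, hσ1, hq0, hq1, hVc⟩
    simp only [expT, eu]
    have hstep : ∀ a' : Fin (n + 1),
        expT (child a') (fun t => bval (@Traj.step n child σ q b a' t))
          = ∑ i : Fin (n + 1), (σ i * ((if i = a' then (1 : ℝ) else 0) / q i)
              * eu (child a') + σ i * (b i - (if i = a' then (1 : ℝ) else 0) / q i * b i)) := by
      intro a'
      have h1 : (fun t : Traj (child a') => bval (@Traj.step n child σ q b a' t))
          = fun t => ∑ i : Fin (n + 1),
              (σ i * ((if i = a' then (1 : ℝ) else 0) / q i) * bval t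
                + σ i * (b i - (if i = a' then (1 : ℝ) else 0) / q i * b i)) := by
        funext t
        show (∑ i : Fin (n + 1), σ i *
            ((if i = a' then (1 : ℝ) else 0) / q i * (bval t - b i) + b i)) = _
        refine Finset.sum_congr rfl (fun i _ => by ring)
      rw [h1, expT_sum]
      refine Finset.sum_congr rfl (fun i _ => ?_)
      rw [expT_affine _ (hVc a'), ih a' (hVc a')]
    calc ∑ a', q a' * expT (child a') (fun t => bval (@Traj.step n child σ q b a' t))
        = ∑ a', ∑ i : Fin (n + 1), q a' * (σ i * ((if i = a' then (1 : ℝ) else 0) / q i)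
            * eu (child a') + σ i * (b i - (if i = a' then (1 : ℝ) else 0) / q i * b i)) := by
          refine Finset.sum_congr rfl (fun a' _ => ?_)
          rw [hstep a', Finset.mul_sum]
      _ = ∑ i : Fin (n + 1), ∑ a', q a' * (σ i * ((if i = a' then (1 : ℝ) else 0) / q i)
            * eu (child a') + σ i * (b i - (if i = a' then (1 : ℝ) else 0) / q i * b i)) :=
          Finset.sum_comm
      _ = ∑ i : Fin (n + 1), σ i * eu (child i) := by
          refine Finset.sum_congr rfl (fun i _ => ?_)
          have hne : q i ≠ 0 := ne_of_gt (hq0 i)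
          have h2 : ∀ a', q a' * (σ i * ((if i = a' then (1 : ℝ) else 0) / q i)
              * eu (child a') + σ i * (b i - (if i = a' then (1 : ℝ) else 0) / q i * b i))
              = q a' * (if i = a' then σ i / q i * eu (child i) + σ i * (b i - b i / q i)
                  else σ i * b i) := by
            intro a'
            by_cases h : i = a'
            · subst h; simp
              left; field_simp
            · simp only [if_neg h]; ring
          simp only [h2]
          rw [sum_q_ite q hq1]
          field_simp
          ring
      _ = eu (node n child σ q b) := by simp [eu]

end GameTree

/-- Exact one-step recursion for the action-value variance: for every
internal game tree, action `a`, and arbitrary baseline,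
`Var_z[v̂(T, a; z)] = (1/q_T(a))·Var_{z'}[v̂(T_a; z')]
  + ((1 − q_T(a))/q_T(a))·(û(T_a) − b_T(a))²`,
and consequently
`Var_z[v̂(T, a; z)] ≤ (1/q_T(a))·(Var_{z'}[v̂(T_a; z')] + (û(T_a) − b_T(a))²)`. -/
theorem varAct_oneStep (n : ℕ) (child : Fin (n + 1) → GameTree)
    (σ q b : Fin (n + 1) → ℝ)
    (hV : GameTree.Valid (.node n child σ q b)) (a : Fin (n + 1)) :
    GameTree.varT (.node n child σ q b) (GameTree.bvalAct a)
        = 1 / q a * GameTree.varT (child a) (fun z => GameTree.bval z)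
          + (1 - q a) / q a * (GameTree.eu (child a) - b a) ^ 2 ∧
    GameTree.varT (.node n child σ q b) (GameTree.bvalAct a)
        ≤ 1 / q a * (GameTree.varT (child a) (fun z => GameTree.bval z)
          + (GameTree.eu (child a) - b a) ^ 2) := by
  open GameTree in
  obtain ⟨hσ0, hσ1, hq0, hq1, hVc⟩ := hV
  have hQ : q a ≠ 0 := ne_of_gt (hq0 a)
  have hμ : expT (child a) (fun z => bval z) = eu (child a) := expT_bval _ (hVc a)
  set μ := eu (child a) with hμdef
  set B := b a with hBdef
  set V := varT (child a) (fun z => bval z) with hVdef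
  -- expectation of the action value
  have hstep : ∀ a' : Fin (n + 1),
      expT (child a') (fun t => bvalAct a (@Traj.step n child σ q b a' t))
        = if a = a' then 1 / q a * (μ - B) + B else B := by
    intro a'
    by_cases h : a = a'
    · subst h
      rw [if_pos rfl]
      have h1 : (fun t : Traj (child a) => bvalAct a (@Traj.step n child σ q b a t))
          = fun t => (1 / q a) * bval t + (B - 1 / q a * B) := by
        funext t; simp [bvalAct]; ring
      rw [h1, expT_affine _ (hVc a), hμ]
      ring
    · rw [if_neg h]
      have h1 : (fun t : Traj (child a') => bvalAct a (@Traj.step n child σ q b a' t))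
          = fun _ => B := by
        funext t; simp [bvalAct, h]; rfl
      rw [h1, expT_const _ (hVc a')]
  have hM : expT (GameTree.node n child σ q b) (bvalAct a) = μ := by
    show (∑ a', q a' * expT (child a') (fun t => bvalAct a (@Traj.step n child σ q b a' t))) = μ
    simp only [hstep]
    rw [sum_q_ite q hq1]
    field_simp
    ring
  have hE0 : expT (child a) (fun t => bval t - μ) = 0 := by
    have h1 : (fun t : Traj (child a) => bval t - μ) = fun t => 1 * bval t + (-μ) := by
      funext t; ring
    rw [h1, expT_affine _ (hVc a), hμ]; ring
  have hV2 : expT (child a) (fun t => (bval t - μ) ^ 2) = V := by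
    rw [hVdef, varT, hμ]
  have hvar : varT (GameTree.node n child σ q b) (bvalAct a)
      = 1 / q a * V + (1 - q a) / q a * (μ - B) ^ 2 := by
    rw [varT, hM]
    show (∑ a', q a' * expT (child a')
        (fun t => (bvalAct a (@Traj.step n child σ q b a' t) - μ) ^ 2)) = _
    have hstep2 : ∀ a' : Fin (n + 1),
        expT (child a') (fun t => (bvalAct a (@Traj.step n child σ q b a' t) - μ) ^ 2)
          = if a = a' then 1 / q a ^ 2 * V + ((μ - B) * (1 - q a) / q a) ^ 2
            else (B - μ) ^ 2 := by
      intro a'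
      by_cases h : a = a'
      · subst h
        rw [if_pos rfl]
        have h1 : (fun t : Traj (child a) =>
            (bvalAct a (@Traj.step n child σ q b a t) - μ) ^ 2)
            = fun t => ((1 / q a) * (bval t - μ) + (μ - B) * (1 - q a) / q a) ^ 2 := by
          funext t; simp [bvalAct]; field_simp; ring
        rw [h1, expT_affine_sq _ (hVc a), hV2, hE0]
        ring
      · rw [if_neg h]
        have h1 : (fun t : Traj (child a') =>
            (bvalAct a (@Traj.step n child σ q b a' t) - μ) ^ 2)
            = fun _ => (B - μ) ^ 2 := by
          funext t; simp [bvalAct, h]; rfl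
        rw [h1, expT_const _ (hVc a')]
    simp only [hstep2]
    rw [sum_q_ite q hq1]
    field_simp
    ring
  refine ⟨hvar, ?_⟩
  rw [hvar]
  have hd : (0:ℝ) ≤ (μ - B) ^ 2 := sq_nonneg _
  have key : 1 / q a * (V + (μ - B) ^ 2)
      = 1 / q a * V + (1 - q a) / q a * (μ - B) ^ 2 + (μ - B) ^ 2 := by
    field_simp
    ring
  linarith
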